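/- (Aubin–Nitsche duality L² estimate.) Let Ω ⊂ ℝ² be a bounded domain, V_h ⊂ H^1_0(Ω) a subspace, and u, u_h ∈ H^1_0(Ω) satisfy the Galerkin orthogonality (∇(u − u_h), ∇w_h) = 0 for all w_h ∈ V_h. Suppose the dual regularity holds: for every g ∈ L²(Ω) the solution w ∈ H^1_0(Ω) of (∇w, ∇v) = (g, v) for all v ∈ H^1_0(Ω) satisfies |w|_2 ≤ C‖g‖_0, and suppose the Galerkin approximation w_h ∈ V_h of w satisfies |w − w_h|_1 ≤ C h |w|_2. If additionally |u − u_h|_1 ≤ C h^k |u|_{k+1}, then ‖u − u_h‖_{L²(Ω)} ≤ C h^{k+1} |u|_{k+1}. -/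

import Mathlib

open MeasureTheory MvPolynomial
open scoped RealInnerProductSpace

noncomputable section

abbrev E2 : Type := EuclideanSpace ℝ (Fin 2)

/-- `f` agrees on `s` with a bivariate polynomial of total degree at most `k`. -/
def IsPolyOn (k : ℕ) (s : Set E2) (f : E2 → ℝ) : Prop :=
  ∃ p : MvPolynomial (Fin 2) ℝ, p.totalDegree ≤ k ∧
    ∀ x ∈ s, f x = eval (fun i => x i) p

/-- A nondegenerate triangle in the plane. -/
structure Tri where
  A : E2
  B : E2
  C : E2
  indep : AffineIndependent ℝ ![A, B, C]

def Tri.K (T : Tri) : Set E2 := convexHull ℝ {T.A, T.B, T.C}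
def Tri.bary (T : Tri) : E2 := (3 : ℝ)⁻¹ • (T.A + T.B + T.C)
def Tri.K1 (T : Tri) : Set E2 := convexHull ℝ {T.bary, T.B, T.C}
def Tri.K2 (T : Tri) : Set E2 := convexHull ℝ {T.bary, T.C, T.A}
def Tri.K3 (T : Tri) : Set E2 := convexHull ℝ {T.bary, T.A, T.B}

/-- The HCT macro-element space `𝕍_k(K)`: continuous on `K`, polynomial of degree ≤ k on
each HCT subtriangle. -/
def Vk (k : ℕ) (T : Tri) (v : E2 → ℝ) : Prop :=
  ContinuousOn v T.K ∧ IsPolyOn k T.K1 v ∧ IsPolyOn k T.K2 v ∧ IsPolyOn k T.K3 v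

/-- The continuous piecewise-affine hat function on the HCT split: 1 at the barycenter,
0 on ∂K, affine on each subtriangle. -/
def IsHCTHat (T : Tri) (φ : E2 → ℝ) : Prop :=
  ContinuousOn φ T.K ∧ (∀ x ∈ frontier T.K, φ x = 0) ∧ φ T.bary = 1 ∧
    (∃ ℓ : E2 →ᵃ[ℝ] ℝ, ∀ x ∈ T.K1, φ x = ℓ x) ∧
    (∃ ℓ : E2 →ᵃ[ℝ] ℝ, ∀ x ∈ T.K2, φ x = ℓ x) ∧
    (∃ ℓ : E2 →ᵃ[ℝ] ℝ, ∀ x ∈ T.K3, φ x = ℓ x)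

/-- The (strong) Laplacian of `u : ℝ² → ℝ`. -/
def lap (u : E2 → ℝ) (x : E2) : ℝ :=
  ∑ i : Fin 2,
    fderiv ℝ (fun y => fderiv ℝ u y (EuclideanSpace.single i (1 : ℝ))) x
      (EuclideanSpace.single i (1 : ℝ))

/-
Duality: testing the dual problem with the error `e = u - u_h` gives
`‖e‖₀² = (∇w, ∇e) = (∇(w - w_h), ∇e)` by Galerkin orthogonality, so by Cauchy–Schwarz
`‖e‖₀² ≤ |w - w_h|₁ |e|₁ ≤ (C h |w|₂)(C h^k |u|_{k+1}) ≤ C³ h^{k+1} |u|_{k+1} ‖e‖₀`,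
and dividing by `‖e‖₀` gives the estimate.
-/

namespace MeasureTheory

variable {α E : Type*} [MeasurableSpace α] {μ : Measure α}
  [NormedAddCommGroup E] [InnerProductSpace ℝ E] {f g c : α → E}

theorem MemLp.norm_toLp_two (hf : MemLp f 2 μ) :
    ‖hf.toLp f‖ = Real.sqrt (∫ x, ‖f x‖ ^ 2 ∂μ) := by
  have hinner : ⟪hf.toLp f, hf.toLp f⟫ = ∫ x, ‖f x‖ ^ 2 ∂μ := by
    rw [L2.inner_def]
    refine integral_congr_ae ?_
    filter_upwards [hf.coeFn_toLp] with x hx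
    rw [hx, real_inner_self_eq_norm_sq]
  rw [← hinner, real_inner_self_eq_norm_sq, Real.sqrt_sq (norm_nonneg _)]

theorem MemLp.integral_inner_eq (hf : MemLp f 2 μ) (hg : MemLp g 2 μ) :
    ∫ x, ⟪f x, g x⟫ ∂μ = ⟪hf.toLp f, hg.toLp g⟫ := by
  rw [L2.inner_def]
  refine integral_congr_ae ?_
  filter_upwards [hf.coeFn_toLp, hg.coeFn_toLp] with x hfx hgx
  rw [hfx, hgx]

theorem MemLp.integrable_inner (hf : MemLp f 2 μ) (hg : MemLp g 2 μ) :
    Integrable (fun x => ⟪f x, g x⟫) μ := by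
  refine (L2.integrable_inner (𝕜 := ℝ) (hf.toLp f) (hg.toLp g)).congr ?_
  filter_upwards [hf.coeFn_toLp, hg.coeFn_toLp] with x hfx hgx
  rw [hfx, hgx]

theorem MemLp.integral_inner_le (hf : MemLp f 2 μ) (hg : MemLp g 2 μ) :
    ∫ x, ⟪f x, g x⟫ ∂μ ≤ Real.sqrt (∫ x, ‖f x‖ ^ 2 ∂μ) * Real.sqrt (∫ x, ‖g x‖ ^ 2 ∂μ) := by
  rw [hf.integral_inner_eq hg, ← hf.norm_toLp_two, ← hg.norm_toLp_two]
  exact real_inner_le_norm _ _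

theorem integral_inner_le_of_integral_inner_eq_zero
    (hfg : MemLp (fun x => f x - g x) 2 μ) (hc : MemLp c 2 μ)
    (horth : ∫ x, ⟪g x, c x⟫ ∂μ = 0) :
    ∫ x, ⟪f x, c x⟫ ∂μ ≤
      Real.sqrt (∫ x, ‖f x - g x‖ ^ 2 ∂μ) * Real.sqrt (∫ x, ‖c x‖ ^ 2 ∂μ) := by
  -- `⟪f, c⟫` need not be integrable; if it is not, its integral is the junk value `0`.
  by_cases hint : Integrable (fun x => ⟪f x, c x⟫) μ
  · have hdiff := hfg.integrable_inner hc
    have hg : Integrable (fun x => ⟪g x, c x⟫) μ := by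
      refine (hint.sub hdiff).congr (ae_of_all _ fun x => ?_)
      simp only [Pi.sub_apply, inner_sub_left, sub_sub_cancel]
    have hsplit : ∫ x, ⟪f x, c x⟫ ∂μ = ∫ x, ⟪f x - g x, c x⟫ ∂μ := by
      simp only [inner_sub_left]
      rw [integral_sub hint hg, horth, sub_zero]
    exact hsplit ▸ hfg.integral_inner_le hc
  · rw [integral_undef hint]
    positivity

end MeasureTheory

/-- Aubin–Nitsche duality argument.  With `w` the dual solution for the
datum `g = u - u_h` and `w_h ∈ V_h` its Galerkin projection, the Galerkin orthogonality,
full regularity `|w|₂ ≤ C‖u-u_h‖₀`, the first-order bound `|w-w_h|₁ ≤ C h |w|₂`, and the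
`H¹` error bound `|u-u_h|₁ ≤ C h^k |u|_{k+1}` together give
`‖u - u_h‖₀ ≤ C³ h^{k+1} |u|_{k+1}`. -/
theorem aubin_nitsche (Ω : Set E2) (k : ℕ) (C h : ℝ) (hC : 0 ≤ C) (hh : 0 ≤ h)
    (Vh : Set (E2 → ℝ)) (u uh w wh : E2 → ℝ) (hwh : wh ∈ Vh)
    (hmeu : MemLp (fun x => gradient u x - gradient uh x) 2 (volume.restrict Ω))
    (hmew : MemLp (fun x => gradient w x - gradient wh x) 2 (volume.restrict Ω))
    (horth : ∀ vh ∈ Vh,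
      ∫ x in Ω, ⟪gradient u x - gradient uh x, gradient vh x⟫ = 0)
    (hdual : ∫ x in Ω, ⟪gradient w x, gradient u x - gradient uh x⟫ =
      ∫ x in Ω, (u x - uh x) ^ 2)
    (hreg : Real.sqrt (∫ x in Ω, ‖fderiv ℝ (fderiv ℝ w) x‖ ^ 2) ≤
      C * Real.sqrt (∫ x in Ω, (u x - uh x) ^ 2))
    (happrox : Real.sqrt (∫ x in Ω, ‖gradient w x - gradient wh x‖ ^ 2) ≤
      C * h * Real.sqrt (∫ x in Ω, ‖fderiv ℝ (fderiv ℝ w) x‖ ^ 2))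
    (herr : Real.sqrt (∫ x in Ω, ‖gradient u x - gradient uh x‖ ^ 2) ≤
      C * h ^ k * Real.sqrt (∫ x in Ω, ‖iteratedFDeriv ℝ (k + 1) u x‖ ^ 2)) :
    Real.sqrt (∫ x in Ω, (u x - uh x) ^ 2) ≤
      C ^ 3 * h ^ (k + 1) * Real.sqrt (∫ x in Ω, ‖iteratedFDeriv ℝ (k + 1) u x‖ ^ 2) := by
  set e := ∫ x in Ω, (u x - uh x) ^ 2
  set U := Real.sqrt (∫ x in Ω, ‖iteratedFDeriv ℝ (k + 1) u x‖ ^ 2)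
  have horth_wh : ∫ x in Ω, ⟪gradient wh x, gradient u x - gradient uh x⟫ = 0 := by
    simpa only [real_inner_comm] using horth wh hwh
  have hduality : e ≤ Real.sqrt (∫ x in Ω, ‖gradient w x - gradient wh x‖ ^ 2) *
      Real.sqrt (∫ x in Ω, ‖gradient u x - gradient uh x‖ ^ 2) :=
    hdual ▸ integral_inner_le_of_integral_inner_eq_zero hmew hmeu horth_wh
  have hbound : e ≤ C ^ 3 * h ^ (k + 1) * U * Real.sqrt e := calc
    e ≤ (C * h * (C * Real.sqrt e)) * (C * h ^ k * U) :=
      hduality.trans (mul_le_mul (happrox.trans (by gcongr)) herr (Real.sqrt_nonneg _)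
        (by positivity))
    _ = C ^ 3 * h ^ (k + 1) * U * Real.sqrt e := by ring
  have he : Real.sqrt e ^ 2 = e := Real.sq_sqrt (integral_nonneg fun x => sq_nonneg _)
  have hB : 0 ≤ C ^ 3 * h ^ (k + 1) * U := by positivity
  nlinarith [Real.sqrt_nonneg e]
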